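/- For isotropic state noise Q = σ²Id with Φ symmetric positive semidefinite, the proximity operator of θf₁, where f₁(A) = (K/(2σ²)) tr(Σ − CAᵀ − ACᵀ + AΦAᵀ), is prox_{θf₁}(Ã) = ((θK/σ²) C + Ã) ((θK/σ²) Φ + Id)^{-1}. -/

import Mathlib

/-!
With `l = θK/σ²` and `M = l • Φ + 1`, the objective is, up to a constant,
`½ tr(A M Aᵀ) - tr(A Lᵀ)` with `L = l • C + Ã`. Since `M` is positive definite, completing the
square around `P = L M⁻¹` gives `F A = F P + ½ tr((A - P) M (A - P)ᵀ)`, and the last term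
vanishes only at `A = P`.
-/

open scoped Matrix
open Finset

namespace Matrix

variable {m n R : Type*} [Fintype m] [Fintype n]

theorem trace_mul_transpose_comm [CommSemiring R] (X Y : Matrix m n R) :
    (X * Yᵀ).trace = (Y * Xᵀ).trace := by
  rw [← trace_transpose, transpose_mul, transpose_transpose]

theorem trace_mul_mul_transpose [CommSemiring R] (M : Matrix n n R) (B : Matrix m n R) :
    (B * M * Bᵀ).trace = ∑ i, B i ⬝ᵥ M *ᵥ B i :=
  Finset.sum_congr rfl fun i _ => (dotProduct_mulVec (B i) M (B i)).symm

theorem sum_sum_sq_eq_trace_mul_transpose [CommSemiring R] (A : Matrix m n R) :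
    ∑ i, ∑ j, A i j ^ 2 = (A * Aᵀ).trace := by
  simp [trace, mul_apply, sq]

theorem trace_sub_mul_mul_transpose_sub [CommRing R] {M : Matrix n n R} (hM : Mᵀ = M)
    (A P : Matrix m n R) :
    ((A - P) * M * (A - P)ᵀ).trace
      = (A * M * Aᵀ).trace - 2 * (A * (P * M)ᵀ).trace + (P * M * Pᵀ).trace := by
  have hPMA : (P * M * Aᵀ).trace = (A * (P * M)ᵀ).trace := trace_mul_transpose_comm _ _
  have hAMP : (A * M * Pᵀ).trace = (A * (P * M)ᵀ).trace := by
    rw [transpose_mul, hM, Matrix.mul_assoc]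
  simp only [transpose_sub, Matrix.sub_mul, Matrix.mul_sub, trace_sub, hPMA, hAMP]
  ring

theorem PosSemidef.trace_mul_mul_transpose_nonneg {M : Matrix n n ℝ} (hM : M.PosSemidef)
    (B : Matrix m n ℝ) : 0 ≤ (B * M * Bᵀ).trace := by
  rw [trace_mul_mul_transpose]
  exact sum_nonneg fun i _ => by simpa using hM.dotProduct_mulVec_nonneg (B i)

theorem PosDef.trace_mul_mul_transpose_pos {M : Matrix n n ℝ} (hM : M.PosDef)
    {B : Matrix m n ℝ} (hB : B ≠ 0) : 0 < (B * M * Bᵀ).trace := by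
  obtain ⟨i, hi⟩ : ∃ i, B i ≠ 0 := by
    by_contra! h
    exact hB (funext h)
  rw [trace_mul_mul_transpose]
  refine sum_pos' (fun j _ => ?_) ⟨i, mem_univ i, by simpa using hM.dotProduct_mulVec_pos hi⟩
  simpa using hM.posSemidef.dotProduct_mulVec_nonneg (B j)

theorem PosDef.unique_minimizer_of_eq_quadratic {M : Matrix n n ℝ} (hM : M.PosDef)
    {L P : Matrix m n ℝ} (hPM : P * M = L) {F : Matrix m n ℝ → ℝ} (c : ℝ)
    (hF : ∀ A, F A = c + (1 / 2) * (A * M * Aᵀ).trace - (A * Lᵀ).trace) :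
    (∀ A, F P ≤ F A) ∧ (∀ A, (∀ B, F A ≤ F B) → A = P) := by
  subst hPM
  have hMt : Mᵀ = M := by simpa using hM.isHermitian.eq
  have hF_sq : ∀ A, F A = F P + (1 / 2) * ((A - P) * M * (A - P)ᵀ).trace := fun A => by
    rw [hF, hF, trace_sub_mul_mul_transpose_sub hMt, trace_mul_transpose_comm (P * M) P]
    ring
  refine ⟨fun A => ?_, fun A hA => ?_⟩
  · linarith [hF_sq A, hM.posSemidef.trace_mul_mul_transpose_nonneg (A - P)]
  · by_contra hAP
    linarith [hF_sq A, hA P, hM.trace_mul_mul_transpose_pos (sub_ne_zero.mpr hAP)]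

theorem trace_quadratic_add_half_sum_sq_sub [DecidableEq n] (l : ℝ) (S : Matrix m m ℝ)
    (C A At : Matrix m n ℝ) (Φ : Matrix n n ℝ) :
    l / 2 * (S - C * Aᵀ - A * Cᵀ + A * Φ * Aᵀ).trace + (1 / 2) * ∑ i, ∑ j, (A i j - At i j) ^ 2
      = (l / 2 * S.trace + (1 / 2) * (At * Atᵀ).trace)
        + (1 / 2) * (A * (l • Φ + 1) * Aᵀ).trace - (A * (l • C + At)ᵀ).trace := by
  have hsq : ∑ i, ∑ j, (A i j - At i j) ^ 2
      = ((A - At) * (1 : Matrix n n ℝ) * (A - At)ᵀ).trace := by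
    rw [Matrix.mul_one]
    exact sum_sum_sq_eq_trace_mul_transpose (A - At)
  have hCA : (C * Aᵀ).trace = (A * Cᵀ).trace := trace_mul_transpose_comm C A
  rw [hsq, trace_sub_mul_mul_transpose_sub transpose_one]
  simp only [Matrix.mul_one, Matrix.mul_add, Matrix.add_mul, Matrix.mul_smul, Matrix.smul_mul,
    transpose_add, transpose_smul, trace_add, trace_sub, trace_smul, smul_eq_mul, hCA]
  ring

end Matrix

theorem prox_quadratic_isotropic_general (N : ℕ) (σ θ K : ℝ)
    (hθ : 0 < θ) (hK : 0 < K)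
    (Sig C Φ : Matrix (Fin N) (Fin N) ℝ) (hΦ : Φ.PosSemidef)
    (At : Matrix (Fin N) (Fin N) ℝ)
    (f₁ F : Matrix (Fin N) (Fin N) ℝ → ℝ)
    (hf₁ : ∀ A, f₁ A = (K / (2 * σ ^ 2)) *
      (Sig - C * Aᵀ - A * Cᵀ + A * Φ * Aᵀ).trace)
    (hF : ∀ A, F A = θ * f₁ A + (1 / 2) * (∑ n, ∑ m, (A n m - At n m) ^ 2))
    (P : Matrix (Fin N) (Fin N) ℝ)
    (hP : P = ((θ * K / σ ^ 2) • C + At) * ((θ * K / σ ^ 2) • Φ + 1)⁻¹) :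
    (∀ A, F P ≤ F A) ∧ (∀ A, (∀ B, F A ≤ F B) → A = P) := by
  set l := θ * K / σ ^ 2
  have hl : 0 ≤ l := by positivity
  have hM : (l • Φ + 1).PosDef := Matrix.PosDef.posSemidef_add (hΦ.smul hl) .one
  have hPM : P * (l • Φ + 1) = l • C + At := by
    rw [hP, Matrix.mul_assoc, Matrix.nonsing_inv_mul _ hM.det_pos.ne'.isUnit, Matrix.mul_one]
  refine hM.unique_minimizer_of_eq_quadratic hPM (l / 2 * Sig.trace + (1 / 2) * (At * Atᵀ).trace)
    fun A => ?_
  rw [hF, hf₁, ← Matrix.trace_quadratic_add_half_sum_sq_sub]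
  ring

/-- For isotropic state noise `Q = σ²Id` with `Φ` symmetric positive
semidefinite, the proximity operator of `θ f₁`, where
`f₁(A) = (K/(2σ²)) tr(Σ − CAᵀ − ACᵀ + AΦAᵀ)`, is
`((θK/σ²) C + Ã)((θK/σ²) Φ + Id)⁻¹` : it is the unique minimizer of
`A ↦ θ f₁(A) + ½‖A − Ã‖_F²`. -/
theorem prox_quadratic_isotropic (N : ℕ) (σ θ K : ℝ)
    (hσ : 0 < σ) (hθ : 0 < θ) (hK : 0 < K)
    (Sig C Φ : Matrix (Fin N) (Fin N) ℝ) (hΦ : Φ.PosSemidef)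
    (At : Matrix (Fin N) (Fin N) ℝ)
    (f₁ F : Matrix (Fin N) (Fin N) ℝ → ℝ)
    (hf₁ : ∀ A, f₁ A = (K / (2 * σ ^ 2)) *
      (Sig - C * Aᵀ - A * Cᵀ + A * Φ * Aᵀ).trace)
    (hF : ∀ A, F A = θ * f₁ A + (1 / 2) * (∑ n, ∑ m, (A n m - At n m) ^ 2))
    (P : Matrix (Fin N) (Fin N) ℝ)
    (hP : P = ((θ * K / σ ^ 2) • C + At) * ((θ * K / σ ^ 2) • Φ + 1)⁻¹) :
    (∀ A, F P ≤ F A) ∧ (∀ A, (∀ B, F A ≤ F B) → A = P) :=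
  prox_quadratic_isotropic_general N σ θ K hθ hK Sig C Φ hΦ At f₁ F hf₁ hF P hP
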